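/- arXiv:2512.09763 — 3 statements merged into one kernel-verified Lean document; each statement's English description precedes it below -/
import Mathlib

section
/- Let µ be a Borel probability measure on ℝ^d with finite second moment, γ a tangent element at µ, and η₁, η₂ Borel probability measures on C([0,1],ℝ^d) with (e₀)_#η₁ = (e₀)_#η₂ = µ and (e₀,e₁)_#η₁ = (e₀,e₁)_#η₂. If Ψ₁ is a parallel transport of γ along η₁, then there exists a parallel transport Ψ₂ of γ along η₂ such that (e₀,e₁)_#Ψ₂ = (e₀,e₁)_#Ψ₁, where (e₀,e₁) maps a curve to its pair of endpoint values. In particular, the possible endpoint data of parallel transports of γ depend only on the coupling (e₀,e₁)_#η. -/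
/-!
Along a parallel transport `Ψ` the second component is a constant vector `v`, so the laws of
`ψ(0)` and of `(ψ(0), ψ(1))` are functions of the joint law `ν` of `(x(0), x(1), v)` alone,
where `x` is the first component. Under `Ψ₁`, the first marginal of `ν` is the endpoint law
of `η₁`, which is also that of `η₂`. Disintegrating `ν` over it and gluing the conditional
law of `v` to `η₂` along `ev01` yields a law of pairs `(x, v)` with `x ∼ η₂` whose
`(x(0), x(1), v)`-law is again `ν`; attaching the constant `v` to `x` gives `Ψ₂`.
-/

open MeasureTheory
open scoped ENNReal NNReal unitInterval

noncomputable section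

abbrev Rd (d : ℕ) := EuclideanSpace ℝ (Fin d)

abbrev Curves (E : Type*) [TopologicalSpace E] := C(unitInterval, E)

instance (E : Type*) [TopologicalSpace E] : MeasurableSpace (Curves E) := borel _
instance (E : Type*) [TopologicalSpace E] : BorelSpace (Curves E) := ⟨rfl⟩

/-- Evaluation at time `t` of a continuous curve. -/
def ev {E : Type*} [TopologicalSpace E] (t : unitInterval) (f : Curves E) : E := f t

/-- First-component curve of a curve in a product space. -/
def p₁ {E F : Type*} [TopologicalSpace E] [TopologicalSpace F] (ψ : Curves (E × F)) : Curves E :=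
  ⟨fun t => (ψ t).1, continuous_fst.comp ψ.continuous⟩

/-- Finite second moment. -/
def FinSM {E : Type*} [MeasurableSpace E] [NormedAddCommGroup E] (μ : Measure E) : Prop :=
  ∫⁻ x, (‖x‖₊ : ℝ≥0∞) ^ 2 ∂μ < ⊤

/-- A tangent element at `μ`. -/
def IsTangent {E : Type*} [MeasurableSpace E] [NormedAddCommGroup E]
    (μ : Measure E) (γ : Measure (E × E)) : Prop :=
  IsProbabilityMeasure γ ∧ γ.map Prod.fst = μ ∧ FinSM (γ.map Prod.snd)

/-- Parallel transport of a tangent element `γ` along a Lagrangian path `η`. -/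
def IsParallelTransport {E : Type*} [TopologicalSpace E] [MeasurableSpace E]
    (γ : Measure (E × E)) (η : Measure (Curves E)) (Ψ : Measure (Curves (E × E))) : Prop :=
  IsProbabilityMeasure Ψ ∧
  (∀ᵐ ψ ∂Ψ, ∀ t : unitInterval, (ψ t).2 = (ψ 0).2) ∧
  Ψ.map p₁ = η ∧
  Ψ.map (ev 0) = γ

/-- Endpoint evaluation map: a curve goes to its pair of values at times 0 and 1. -/
def ev01 {E : Type*} [TopologicalSpace E] (f : Curves E) : E × E := (f 0, f 1)

open ProbabilityTheory

namespace MeasureTheory.Measure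

variable {α β Ω : Type*} [MeasurableSpace α] [MeasurableSpace β] [MeasurableSpace Ω]

lemma map_prodMap_compProd_comap (μ : Measure α) [SFinite μ] {g : α → β} (hg : Measurable g)
    (κ : Kernel β Ω) [IsSFiniteKernel κ] :
    (μ ⊗ₘ κ.comap g hg).map (Prod.map g id) = μ.map g ⊗ₘ κ := by
  ext s hs
  rw [map_apply (hg.prodMap measurable_id) hs,
    compProd_apply (hs.preimage (hg.prodMap measurable_id)), compProd_apply hs,
    lintegral_map (Kernel.measurable_kernel_prodMk_left hs) hg]
  rfl

lemma exists_fst_eq_and_map_prodMap_eq [StandardBorelSpace Ω] [Nonempty Ω]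
    (μ : Measure α) [SFinite μ] {g : α → β} (hg : Measurable g)
    (ν : Measure (β × Ω)) [IsFiniteMeasure ν] (hν : ν.fst = μ.map g) :
    ∃ m : Measure (α × Ω), m.fst = μ ∧ m.map (Prod.map g id) = ν :=
  ⟨μ ⊗ₘ ν.condKernel.comap g hg, fst_compProd _ _, by
    rw [map_prodMap_compProd_comap, ← hν, ν.disintegrate]⟩

end MeasureTheory.Measure

section Curves

variable {E F : Type*} [TopologicalSpace E] [TopologicalSpace F]

def prodConst (p : Curves E × F) : Curves (E × F) :=
  ⟨fun t => (p.1 t, p.2), (map_continuous p.1).prodMk continuous_const⟩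

def endpointData (ψ : Curves (E × F)) : (E × E) × F := (ev01 (p₁ ψ), (ψ 0).2)

lemma continuous_ev01 : Continuous (ev01 (E := E)) :=
  (continuous_eval_const 0).prodMk (continuous_eval_const 1)

lemma continuous_p₁ : Continuous (p₁ (E := E) (F := F)) :=
  ContinuousMap.continuous_postcomp (ContinuousMap.fst : C(E × F, E))

lemma continuous_prodConst : Continuous (prodConst (E := E) (F := F)) := by
  apply ContinuousMap.continuous_of_continuous_uncurry
  exact (ContinuousEval.continuous_eval.comp
    (continuous_fst.fst.prodMk continuous_snd)).prodMk continuous_fst.snd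

lemma continuous_endpointData : Continuous (endpointData (E := E) (F := F)) :=
  (continuous_ev01.comp continuous_p₁).prodMk (continuous_snd.comp (continuous_eval_const 0))

lemma p₁_comp_prodConst : p₁ ∘ prodConst = (Prod.fst : Curves E × F → Curves E) := rfl

lemma endpointData_comp_prodConst :
    endpointData ∘ prodConst = (Prod.map ev01 id : Curves E × F → (E × E) × F) := rfl

lemma fst_comp_endpointData :
    Prod.fst ∘ endpointData = ev01 ∘ p₁ (E := E) (F := F) := rfl

lemma ev_zero_eq_comp_endpointData :
    ev 0 = (fun r : (E × E) × F => (r.1.1, r.2)) ∘ endpointData := rfl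

lemma ev01_eq_endpointData_of_snd_const {ψ : Curves (E × F)} (hψ : ∀ t, (ψ t).2 = (ψ 0).2) :
    ev01 ψ = (((endpointData ψ).1.1, (endpointData ψ).2),
      ((endpointData ψ).1.2, (endpointData ψ).2)) :=
  Prod.ext rfl (Prod.ext rfl (hψ 1))

lemma isClosed_setOf_snd_const [T2Space F] :
    IsClosed {ψ : Curves (E × F) | ∀ t, (ψ t).2 = (ψ 0).2} := by
  simp only [Set.ofPred_forall]
  exact isClosed_iInter fun t => isClosed_eq (continuous_snd.comp (continuous_eval_const t))
    (continuous_snd.comp (continuous_eval_const 0))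

end Curves

section Measures

variable {E F : Type*} [TopologicalSpace E] [TopologicalSpace F] [MeasurableSpace F]
  [BorelSpace F] [SecondCountableTopology F]

lemma ae_snd_const_map_prodConst [T2Space F] (m : Measure (Curves E × F)) :
    ∀ᵐ ψ ∂m.map prodConst, ∀ t, (ψ t).2 = (ψ 0).2 := by
  rw [ae_map_iff continuous_prodConst.aemeasurable isClosed_setOf_snd_const.measurableSet]
  exact Filter.Eventually.of_forall fun _ _ => rfl

variable [MeasurableSpace E] [BorelSpace E] [SecondCountableTopology E]

lemma measurable_endpointData : Measurable (endpointData (E := E) (F := F)) :=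
  continuous_endpointData.measurable

lemma map_ev_zero_eq_map_endpointData (Ψ : Measure (Curves (E × F))) :
    Ψ.map (ev 0) = (Ψ.map endpointData).map fun r => (r.1.1, r.2) := by
  rw [Measure.map_map (by fun_prop) measurable_endpointData, ev_zero_eq_comp_endpointData]

lemma map_ev01_eq_map_endpointData {Ψ : Measure (Curves (E × F))}
    (hΨ : ∀ᵐ ψ ∂Ψ, ∀ t, (ψ t).2 = (ψ 0).2) :
    Ψ.map ev01 = (Ψ.map endpointData).map fun r => ((r.1.1, r.2), (r.1.2, r.2)) := by
  rw [Measure.map_map (by fun_prop) measurable_endpointData]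
  exact Measure.map_congr (hΨ.mono fun ψ hψ => ev01_eq_endpointData_of_snd_const hψ)

end Measures

theorem stmt2_general {d : ℕ}
    (γ : Measure (Rd d × Rd d))
    (η₁ η₂ : Measure (Curves (Rd d))) [IsProbabilityMeasure η₂]
    (hend : η₁.map ev01 = η₂.map ev01)
    (Ψ₁ : Measure (Curves (Rd d × Rd d))) (hΨ₁ : IsParallelTransport γ η₁ Ψ₁) :
    ∃ Ψ₂ : Measure (Curves (Rd d × Rd d)),
      IsParallelTransport γ η₂ Ψ₂ ∧ Ψ₂.map ev01 = Ψ₁.map ev01 := by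
  obtain ⟨hΨ₁prob, hΨ₁const, hΨ₁p₁, hΨ₁ev0⟩ := hΨ₁
  have hfst : (Ψ₁.map endpointData).fst = η₂.map ev01 := by
    rw [Measure.fst, Measure.map_map measurable_fst measurable_endpointData, fst_comp_endpointData,
      ← Measure.map_map continuous_ev01.measurable continuous_p₁.measurable, hΨ₁p₁, hend]
  obtain ⟨m, hm_fst, hm_map⟩ :=
    Measure.exists_fst_eq_and_map_prodMap_eq η₂ continuous_ev01.measurable _ hfst
  have hprodConst := continuous_prodConst (E := Rd d) (F := Rd d)
  have hΨ₂ : (m.map prodConst).map endpointData = Ψ₁.map endpointData := by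
    rw [Measure.map_map measurable_endpointData hprodConst.measurable,
      endpointData_comp_prodConst, hm_map]
  refine ⟨m.map prodConst, ⟨?_, ae_snd_const_map_prodConst m, ?_, ?_⟩, ?_⟩
  · have : IsProbabilityMeasure m := ⟨by rw [← Measure.fst_univ, hm_fst, measure_univ]⟩
    exact Measure.isProbabilityMeasure_map hprodConst.aemeasurable
  · rw [Measure.map_map continuous_p₁.measurable hprodConst.measurable, p₁_comp_prodConst,
      ← Measure.fst, hm_fst]
  · rw [map_ev_zero_eq_map_endpointData, hΨ₂, ← map_ev_zero_eq_map_endpointData, hΨ₁ev0]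
  · rw [map_ev01_eq_map_endpointData (ae_snd_const_map_prodConst m), hΨ₂,
      ← map_ev01_eq_map_endpointData hΨ₁const]

theorem stmt2 {d : ℕ} (μ : Measure (Rd d)) [IsProbabilityMeasure μ] (hμ : FinSM μ)
    (γ : Measure (Rd d × Rd d)) (hγ : IsTangent μ γ)
    (η₁ η₂ : Measure (Curves (Rd d))) [IsProbabilityMeasure η₁] [IsProbabilityMeasure η₂]
    (hη₁ : η₁.map (ev 0) = μ) (hη₂ : η₂.map (ev 0) = μ)
    (hend : η₁.map ev01 = η₂.map ev01)
    (Ψ₁ : Measure (Curves (Rd d × Rd d))) (hΨ₁ : IsParallelTransport γ η₁ Ψ₁) :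
    ∃ Ψ₂ : Measure (Curves (Rd d × Rd d)),
      IsParallelTransport γ η₂ Ψ₂ ∧ Ψ₂.map ev01 = Ψ₁.map ev01 :=
  stmt2_general γ η₁ η₂ hend Ψ₁ hΨ₁

end
end

section
/- Parallel transport is not unique in general: in dimension d = 1, let µ = δ₀, let η = ½(δ_{θ¹} + δ_{θ²}) on C([0,1],ℝ) where θ¹(t) = t and θ²(t) = −t, and let γ = δ₀ ⊗ ½(δ₀ + δ₂) on ℝ × ℝ. Then the measures Ψ_W := ½ δ_{t↦(t,0)} + ½ δ_{t↦(−t,2)} and Ψ_M := ½ δ_{t↦(t,2)} + ½ δ_{t↦(−t,0)} on C([0,1],ℝ²) are both parallel transports of γ along η, and Ψ_W ≠ Ψ_M. -/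
open MeasureTheory
open scoped ENNReal NNReal unitInterval

noncomputable section

/-- The curve `t ↦ t` in `ℝ`. -/
def θup : Curves ℝ := ⟨fun t => (t : ℝ), continuous_subtype_val⟩

/-- The curve `t ↦ -t` in `ℝ`. -/
def θdown : Curves ℝ := ⟨fun t => -(t : ℝ), continuous_subtype_val.neg⟩

/-- The curve `t ↦ (θ t, c)` in `ℝ × ℝ`. -/
def withConst (θ : Curves ℝ) (c : ℝ) : Curves (ℝ × ℝ) :=
  θ.prodMk (ContinuousMap.const unitInterval c)

/- Auxiliary lemmas -/

lemma measurable_ev' {E : Type*} [TopologicalSpace E] [MeasurableSpace E] [BorelSpace E]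
    (t : unitInterval) : Measurable (ev (E := E) t) :=
  (ContinuousEvalConst.continuous_eval_const t).measurable

lemma measurable_p₁' {E F : Type*} [TopologicalSpace E] [TopologicalSpace F]
    [MeasurableSpace E] [MeasurableSpace F] :
    Measurable (p₁ (E := E) (F := F)) := by
  have h : p₁ (E := E) (F := F) = fun ψ => (ContinuousMap.fst (α := E) (β := F)).comp ψ := by
    ext ψ t; rfl
  have : Continuous (p₁ (E := E) (F := F)) := by
    rw [h]; exact ContinuousMap.continuous_postcomp _
  exact this.measurable

lemma prod_smul_right' {α β : Type*} [MeasurableSpace α] [MeasurableSpace β]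
    (μ : Measure α) (ν : Measure β) [SFinite μ] [SFinite ν] (c : ℝ≥0∞) (hc : c ≠ ⊤) :
    μ.prod (c • ν) = c • μ.prod ν := by
  ext s hs
  rw [Measure.prod_apply hs, Measure.smul_apply, Measure.prod_apply hs, smul_eq_mul,
    ← lintegral_const_mul' _ _ hc]
  rfl

lemma map_two {α β : Type*} [MeasurableSpace α] [MeasurableSpace β]
    (f : α → β) (hf : Measurable f) (a b : ℝ≥0∞) (x y : α) :
    ((a • Measure.dirac x) + (b • Measure.dirac y)).map f
      = a • Measure.dirac (f x) + b • Measure.dirac (f y) := by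
  rw [Measure.map_add _ _ hf, Measure.map_smul, Measure.map_smul,
    Measure.map_dirac' hf, Measure.map_dirac' hf]

lemma p₁_withConst (θ : Curves ℝ) (c : ℝ) : p₁ (withConst θ c) = θ := by
  ext t; rfl

lemma ev0_withConst (θ : Curves ℝ) (c : ℝ) : ev 0 (withConst θ c) = (θ 0, c) := rfl

lemma θup0 : θup 0 = 0 := rfl
lemma θdown0 : θdown 0 = 0 := by simp [θdown]

lemma half_half : (1/2 : ℝ≥0∞) + 1/2 = 1 := ENNReal.add_halves 1

theorem stmt7
    (η : Measure (Curves ℝ))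
    (hη : η = (1/2 : ℝ≥0∞) • Measure.dirac θup + (1/2 : ℝ≥0∞) • Measure.dirac θdown)
    (γ : Measure (ℝ × ℝ))
    (hγ : γ = (Measure.dirac (0:ℝ)).prod
        ((1/2 : ℝ≥0∞) • Measure.dirac (0:ℝ) + (1/2 : ℝ≥0∞) • Measure.dirac (2:ℝ)))
    (ΨW ΨM : Measure (Curves (ℝ × ℝ)))
    (hW : ΨW = (1/2 : ℝ≥0∞) • Measure.dirac (withConst θup 0)
        + (1/2 : ℝ≥0∞) • Measure.dirac (withConst θdown 2))
    (hM : ΨM = (1/2 : ℝ≥0∞) • Measure.dirac (withConst θup 2)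
        + (1/2 : ℝ≥0∞) • Measure.dirac (withConst θdown 0)) :
    IsParallelTransport γ η ΨW ∧ IsParallelTransport γ η ΨM ∧ ΨW ≠ ΨM := by
  have hγ' : γ = (1/2 : ℝ≥0∞) • Measure.dirac ((0:ℝ), (0:ℝ))
      + (1/2 : ℝ≥0∞) • Measure.dirac ((0:ℝ), (2:ℝ)) := by
    rw [hγ, Measure.prod_add, prod_smul_right' _ _ _ (by norm_num),
      prod_smul_right' _ _ _ (by norm_num), Measure.dirac_prod_dirac,
      Measure.dirac_prod_dirac]
  -- the a.e. constancy set
  have hS : MeasurableSet {ψ : Curves (ℝ × ℝ) | ∀ t : unitInterval, (ψ t).2 = (ψ 0).2} := by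
    have : IsClosed {ψ : Curves (ℝ × ℝ) | ∀ t : unitInterval, (ψ t).2 = (ψ 0).2} := by
      have : {ψ : Curves (ℝ × ℝ) | ∀ t : unitInterval, (ψ t).2 = (ψ 0).2}
          = ⋂ t : unitInterval, {ψ | (ψ t).2 = (ψ 0).2} := by ext ψ; simp
      rw [this]
      exact isClosed_iInter fun t => isClosed_eq
        (continuous_snd.comp (ContinuousEvalConst.continuous_eval_const t))
        (continuous_snd.comp (ContinuousEvalConst.continuous_eval_const 0))
    exact this.measurableSet
  have aeConst : ∀ (a b : Curves (ℝ × ℝ)),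
      (∀ t, (a t).2 = (a 0).2) → (∀ t, (b t).2 = (b 0).2) →
      (∀ᵐ ψ ∂((1/2 : ℝ≥0∞) • Measure.dirac a + (1/2 : ℝ≥0∞) • Measure.dirac b),
        ∀ t : unitInterval, (ψ t).2 = (ψ 0).2) := by
    intro a b ha hb
    rw [ae_iff]
    have : {ψ : Curves (ℝ × ℝ) | ¬ ∀ t : unitInterval, (ψ t).2 = (ψ 0).2}
        = {ψ : Curves (ℝ × ℝ) | ∀ t : unitInterval, (ψ t).2 = (ψ 0).2}ᶜ := rfl
    rw [this, Measure.add_apply, Measure.smul_apply, Measure.smul_apply,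
      Measure.dirac_apply' _ hS.compl, Measure.dirac_apply' _ hS.compl]
    simp [Set.indicator_apply, ha, hb]
  have probTwo : ∀ (a b : Curves (ℝ × ℝ)),
      IsProbabilityMeasure ((1/2 : ℝ≥0∞) • Measure.dirac a + (1/2 : ℝ≥0∞) • Measure.dirac b) := by
    intro a b
    constructor
    rw [Measure.add_apply, Measure.smul_apply, Measure.smul_apply]
    simp [half_half, ENNReal.inv_two_add_inv_two]
  refine ⟨⟨?_, ?_, ?_, ?_⟩, ⟨?_, ?_, ?_, ?_⟩, ?_⟩
  · rw [hW]; exact probTwo _ _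
  · rw [hW]; exact aeConst _ _ (fun t => rfl) (fun t => rfl)
  · rw [hW, map_two _ measurable_p₁', p₁_withConst, p₁_withConst, hη]
  · rw [hW, map_two _ (measurable_ev' 0), hγ']
    congr 1 <;> congr 1 <;> rw [ev0_withConst] <;> simp [θup0, θdown0]
  · rw [hM]; exact probTwo _ _
  · rw [hM]; exact aeConst _ _ (fun t => rfl) (fun t => rfl)
  · rw [hM, map_two _ measurable_p₁', p₁_withConst, p₁_withConst, hη]
  · rw [hM, map_two _ (measurable_ev' 0), hγ']
    rw [add_comm]
    congr 1 <;> congr 1 <;> rw [ev0_withConst] <;> simp [θup0, θdown0]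
  · intro h
    have hne1 : withConst θdown 2 ≠ withConst θup 0 := by
      intro he
      have := congrArg (fun ψ : Curves (ℝ × ℝ) => (ψ 0).2) he
      simp [withConst] at this
    have hne2 : withConst θup 2 ≠ withConst θup 0 := by
      intro he
      have := congrArg (fun ψ : Curves (ℝ × ℝ) => (ψ 0).2) he
      simp [withConst] at this
    have hne3 : withConst θdown 0 ≠ withConst θup 0 := by
      intro he
      have := congrArg (fun ψ : Curves (ℝ × ℝ) => (ψ 1).1) he
      simp [withConst, θup, θdown] at this
      norm_num at this
    have := congrArg (fun m : Measure (Curves (ℝ × ℝ)) => m {withConst θup 0}) h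
    rw [hW, hM] at this
    simp only [Measure.add_apply, Measure.smul_apply,
      Measure.dirac_apply' _ (measurableSet_singleton _)] at this
    simp [Set.indicator_apply, hne1, hne2, hne3] at this

end
end

section
/- Fix α ∈ (0,1]. Let (U_n)_{n≥0} be a sequence of bounded functions U_n : P₂(ℝ^d) → ℝ, each differentiable at every µ ∈ P₂(ℝ^d), with N(U_n) < ∞ for all n, where N(U) := ‖U‖_∞ + sup_µ (∫|D_µU(µ)|² dµ)^{1/2} + I_α(D_µU). If the sequence (U_n) is Cauchy for N (i.e. N(U_n − U_m) → 0 as n,m → ∞, the differences being differentiable with derivative D_µU_n(µ) − D_µU_m(µ)), then there exists a bounded function U : P₂(ℝ^d) → ℝ, differentiable at every µ, with N(U) < ∞, such that N(U_n − U) → 0 as n → ∞. In other words, the space of bounded C^{1,α} functions on P₂(ℝ^d) equipped with the norm N is complete. -/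
open MeasureTheory
open scoped ENNReal NNReal unitInterval

noncomputable section

open scoped RealInnerProductSpace

/-- The space `P₂(ℝ^d)` of Borel probability measures with finite second moment. -/
def P2 (d : ℕ) := {μ : Measure (Rd d) // IsProbabilityMeasure μ ∧ FinSM μ}

/-- `C₂(Γ) = (∫ |x-y|² dΓ)^{1/2}`. -/
def C2 {d : ℕ} (Γ : Measure (Rd d × Rd d)) : ℝ :=
  Real.sqrt (∫ p, ‖p.1 - p.2‖ ^ 2 ∂Γ)

/-- `Γ` is a coupling of `μ` and `ν`. -/
def IsCoupling {d : ℕ} (μ ν : P2 d) (Γ : Measure (Rd d × Rd d)) : Prop :=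
  Γ.map Prod.fst = μ.1 ∧ Γ.map Prod.snd = ν.1

/-- `U` is differentiable at `μ ∈ P₂(ℝ^d)` with derivative `φ`. -/
def IsDerivAt {d : ℕ} (U : P2 d → ℝ) (μ : P2 d) (φ : Rd d → Rd d) : Prop :=
  Measurable φ ∧ (∫⁻ x, (‖φ x‖₊ : ℝ≥0∞) ^ 2 ∂μ.1) < ⊤ ∧
  ∃ ω : ℝ → ℝ, (∀ r, 0 ≤ ω r) ∧ ω 0 = 0 ∧ ContinuousAt ω 0 ∧ Monotone ω ∧
    ∀ ν : P2 d, ∀ Γ : Measure (Rd d × Rd d), IsCoupling μ ν Γ →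
      |U ν - U μ - ∫ p, ⟪p.2 - p.1, φ p.1⟫ ∂Γ| ≤ C2 Γ * ω (C2 Γ)

/-- The Hölder seminorm `I_α` of a derivative field `DU`: supremum over pairs of
measures and couplings `Γ` between them (with `0 < C₂(Γ) ≤ 1` when `α < 1`, and
`0 < C₂(Γ)` when `α = 1`) of
`(∫ |DU(µ)(x) − DU(ν)(y)|² dΓ)^{1/2} / C₂(Γ)^α`. -/
def Ialpha {d : ℕ} (α : ℝ) (DU : P2 d → Rd d → Rd d) : ℝ≥0∞ :=
  ⨆ (μ : P2 d) (ν : P2 d) (Γ : Measure (Rd d × Rd d))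
    (_ : IsCoupling μ ν Γ) (_ : 0 < C2 Γ) (_ : α = 1 ∨ C2 Γ ≤ 1),
    (∫⁻ p, (‖DU μ p.1 - DU ν p.2‖₊ : ℝ≥0∞) ^ 2 ∂Γ) ^ (1/2 : ℝ)
      / ENNReal.ofReal (C2 Γ) ^ α

/-- The `C^{1,α}` norm `N(U) = ‖U‖_∞ + sup_µ ‖D_µU(µ)‖_{L²_µ} + I_α(D_µU)`,
valued in `[0,∞]`. -/
def Nnorm {d : ℕ} (α : ℝ) (U : P2 d → ℝ) (DU : P2 d → Rd d → Rd d) : ℝ≥0∞ :=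
  (⨆ μ : P2 d, (‖U μ‖₊ : ℝ≥0∞))
  + (⨆ μ : P2 d, (∫⁻ x, (‖DU μ x‖₊ : ℝ≥0∞) ^ 2 ∂μ.1) ^ (1/2 : ℝ))
  + Ialpha α DU

/-! Limits are taken componentwise: `U n → V` uniformly, and for every `μ` the derivatives
`DU n μ` converge in `L²(μ)` to some `DV μ`. Each of the three parts of `Nnorm` is lower
semicontinuous under this convergence, which gives `Nnorm (U n - V) → 0`. The crux is that `V`
is differentiable with derivative `DV`: a mean value inequality along the displacement
interpolation of a coupling `Γ` bounds `|W ν - W μ|` by `C₂(Γ) · sup_ρ ‖D W(ρ)‖_{L²(ρ)}`, so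
`U n - V` is `ε C₂(Γ)`-Lipschitz for large `n`, and the moduli `ωₖ` of the `U nₖ` combine into
the modulus `⨅ₖ (ωₖ + 2 εₖ)` of `V`. -/

open Filter Topology

section L2

variable {X E : Type*} [MeasurableSpace X] [NormedAddCommGroup E]

lemma eLpNorm_two_eq_lintegral (m : Measure X) (f : X → E) :
    eLpNorm f 2 m = (∫⁻ x, (‖f x‖₊ : ℝ≥0∞) ^ 2 ∂m) ^ (1/2 : ℝ) := by
  simp [eLpNorm_eq_lintegral_rpow_enorm_toReal two_ne_zero ENNReal.ofNat_ne_top,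
    enorm_eq_nnnorm]

lemma memLp_two_iff_lintegral_lt_top {m : Measure X} {f : X → E}
    (hf : AEStronglyMeasurable f m) :
    MemLp f 2 m ↔ ∫⁻ x, (‖f x‖₊ : ℝ≥0∞) ^ 2 ∂m < ⊤ := by
  rw [MemLp, eLpNorm_two_eq_lintegral, and_iff_right hf]
  constructor
  · intro h
    by_contra! htop
    rw [top_le_iff.1 htop, ENNReal.top_rpow_of_pos (by norm_num)] at h
    exact lt_irrefl _ h
  · exact fun h => ENNReal.rpow_lt_top_of_nonneg (by norm_num) h.ne

lemma sqrt_integral_norm_sq_eq (m : Measure X) {f : X → E} (hf : AEStronglyMeasurable f m) :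
    Real.sqrt (∫ x, ‖f x‖ ^ 2 ∂m) = (eLpNorm f 2 m).toReal := by
  rw [integral_eq_lintegral_of_nonneg_ae (ae_of_all _ fun x => sq_nonneg _)
    (hf.norm.pow 2), eLpNorm_two_eq_lintegral, ← ENNReal.toReal_rpow, Real.sqrt_eq_rpow]
  congr 2
  refine lintegral_congr fun x => ?_
  rw [ENNReal.ofReal_pow (norm_nonneg _), ofReal_norm, enorm_eq_nnnorm]

lemma eLpNorm_le_eLpNorm_add_eLpNorm_sub {m : Measure X} {p : ℝ≥0∞} (hp : 1 ≤ p) {f g : X → E}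
    (hf : AEStronglyMeasurable f m) (hg : AEStronglyMeasurable g m) :
    eLpNorm g p m ≤ eLpNorm f p m + eLpNorm (fun x => f x - g x) p m :=
  (eLpNorm_sub_le hf (hf.sub hg) hp).trans_eq' (by simp)

variable [InnerProductSpace ℝ E]

lemma MemLp.integrable_inner {m : Measure X} {f g : X → E} (hf : MemLp f 2 m)
    (hg : MemLp g 2 m) : Integrable (fun x => ⟪f x, g x⟫) m := by
  refine (L2.integrable_inner (𝕜 := ℝ) (hf.toLp f) (hg.toLp g)).congr ?_
  filter_upwards [hf.coeFn_toLp, hg.coeFn_toLp] with x h1 h2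
  rw [h1, h2]

lemma abs_integral_inner_le {m : Measure X} {f g : X → E} (hf : MemLp f 2 m)
    (hg : MemLp g 2 m) :
    |∫ x, ⟪f x, g x⟫ ∂m| ≤ (eLpNorm f 2 m).toReal * (eLpNorm g 2 m).toReal := by
  have hinner : ⟪hf.toLp f, hg.toLp g⟫ = ∫ x, ⟪f x, g x⟫ ∂m := by
    rw [L2.inner_def]
    refine integral_congr_ae ?_
    filter_upwards [hf.coeFn_toLp, hg.coeFn_toLp] with x h1 h2
    rw [h1, h2]
  rw [← hinner, ← Lp.norm_toLp f hf, ← Lp.norm_toLp g hg]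
  exact abs_real_inner_le_norm _ _

end L2

section Coupling

variable {d : ℕ}

lemma P2.memLp_id (μ : P2 d) : MemLp id 2 μ.1 :=
  (memLp_two_iff_lintegral_lt_top aestronglyMeasurable_id).2 μ.2.2

lemma C2_nonneg (Γ : Measure (Rd d × Rd d)) : 0 ≤ C2 Γ :=
  Real.sqrt_nonneg _

lemma C2_eq_toReal_eLpNorm (Γ : Measure (Rd d × Rd d)) :
    C2 Γ = (eLpNorm (fun p => p.2 - p.1) 2 Γ).toReal := by
  rw [C2, sqrt_integral_norm_sq_eq Γ (f := fun p => p.1 - p.2)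
    (measurable_fst.sub measurable_snd).aestronglyMeasurable, ← eLpNorm_neg]
  simp_rw [Pi.neg_def, neg_sub]

namespace IsCoupling

variable {μ ν : P2 d} {Γ : Measure (Rd d × Rd d)}

lemma isProbabilityMeasure (hΓ : IsCoupling μ ν Γ) : IsProbabilityMeasure Γ := by
  have := μ.2.1
  rw [← hΓ.1] at this
  exact Measure.isProbabilityMeasure_of_map Prod.fst

lemma eLpNorm_comp_fst (hΓ : IsCoupling μ ν Γ) {f : Rd d → Rd d} (hf : Measurable f) :
    eLpNorm (fun p => f p.1) 2 Γ = eLpNorm f 2 μ.1 := by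
  rw [← hΓ.1, eLpNorm_map_measure hf.aestronglyMeasurable measurable_fst.aemeasurable]
  rfl

lemma eLpNorm_comp_snd (hΓ : IsCoupling μ ν Γ) {f : Rd d → Rd d} (hf : Measurable f) :
    eLpNorm (fun p => f p.2) 2 Γ = eLpNorm f 2 ν.1 := by
  rw [← hΓ.2, eLpNorm_map_measure hf.aestronglyMeasurable measurable_snd.aemeasurable]
  rfl

lemma eLpNorm_sub_le (hΓ : IsCoupling μ ν Γ) {f g : Rd d → Rd d} (hf : Measurable f)
    (hg : Measurable g) :
    eLpNorm (fun p => f p.1 - g p.2) 2 Γ ≤ eLpNorm f 2 μ.1 + eLpNorm g 2 ν.1 := by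
  rw [← hΓ.eLpNorm_comp_fst hf, ← hΓ.eLpNorm_comp_snd hg]
  exact MeasureTheory.eLpNorm_sub_le (hf.comp measurable_fst).aestronglyMeasurable
    (hg.comp measurable_snd).aestronglyMeasurable one_le_two

lemma memLp_fst (hΓ : IsCoupling μ ν Γ) : MemLp Prod.fst 2 Γ := by
  have h := μ.memLp_id
  rwa [← hΓ.1, memLp_map_measure_iff aestronglyMeasurable_id measurable_fst.aemeasurable] at h

lemma memLp_snd (hΓ : IsCoupling μ ν Γ) : MemLp Prod.snd 2 Γ := by
  have h := ν.memLp_id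
  rwa [← hΓ.2, memLp_map_measure_iff aestronglyMeasurable_id measurable_snd.aemeasurable] at h

lemma memLp_comp_fst (hΓ : IsCoupling μ ν Γ) {f : Rd d → Rd d} (hf : Measurable f)
    (h : MemLp f 2 μ.1) : MemLp (fun p => f p.1) 2 Γ := by
  rwa [← hΓ.1, memLp_map_measure_iff hf.aestronglyMeasurable measurable_fst.aemeasurable] at h

lemma abs_integral_inner_le (hΓ : IsCoupling μ ν Γ) {ψ : Rd d × Rd d → Rd d}
    (hψ : MemLp ψ 2 Γ) :
    |∫ p, ⟪p.2 - p.1, ψ p⟫ ∂Γ| ≤ C2 Γ * (eLpNorm ψ 2 Γ).toReal := by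
  rw [C2_eq_toReal_eLpNorm]
  exact _root_.abs_integral_inner_le (hΓ.memLp_snd.sub hΓ.memLp_fst) hψ

lemma integrable_inner (hΓ : IsCoupling μ ν Γ) {f : Rd d → Rd d} (hf : Measurable f)
    (h : MemLp f 2 μ.1) : Integrable (fun p => ⟪p.2 - p.1, f p.1⟫) Γ :=
  MemLp.integrable_inner (hΓ.memLp_snd.sub hΓ.memLp_fst) (hΓ.memLp_comp_fst hf h)

lemma integral_inner_sub (hΓ : IsCoupling μ ν Γ) {f g : Rd d → Rd d} (hf : Measurable f)
    (hf2 : MemLp f 2 μ.1) (hg : Measurable g) (hg2 : MemLp g 2 μ.1) :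
    ∫ p, ⟪p.2 - p.1, f p.1 - g p.1⟫ ∂Γ
      = ∫ p, ⟪p.2 - p.1, f p.1⟫ ∂Γ - ∫ p, ⟪p.2 - p.1, g p.1⟫ ∂Γ := by
  simp_rw [inner_sub_right]
  exact integral_sub (hΓ.integrable_inner hf hf2) (hΓ.integrable_inner hg hg2)

lemma abs_integral_inner_comp_fst_le (hΓ : IsCoupling μ ν Γ) {f : Rd d → Rd d}
    (hf : Measurable f) (h : MemLp f 2 μ.1) :
    |∫ p, ⟪p.2 - p.1, f p.1⟫ ∂Γ| ≤ C2 Γ * (eLpNorm f 2 μ.1).toReal := by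
  rw [← hΓ.eLpNorm_comp_fst hf]
  exact hΓ.abs_integral_inner_le (hΓ.memLp_comp_fst hf h)

end IsCoupling

end Coupling

def IsModulus (ω : ℝ → ℝ) : Prop :=
  (∀ r, 0 ≤ ω r) ∧ ω 0 = 0 ∧ ContinuousAt ω 0 ∧ Monotone ω

namespace IsModulus

variable {ω ω' : ℝ → ℝ}

lemma add (hω : IsModulus ω) (hω' : IsModulus ω') : IsModulus (ω + ω') :=
  ⟨fun r => add_nonneg (hω.1 r) (hω'.1 r), by simp [hω.2.1, hω'.2.1],
    hω.2.2.1.add hω'.2.2.1, hω.2.2.2.add hω'.2.2.2⟩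

lemma iInf_add {ω : ℕ → ℝ → ℝ} (hω : ∀ k, IsModulus (ω k)) {e : ℕ → ℝ} (he0 : ∀ k, 0 ≤ e k)
    (he : Tendsto e atTop (𝓝 0)) : IsModulus fun r => ⨅ k, (ω k r + e k) := by
  have hbdd : ∀ r, BddBelow (Set.range fun k => ω k r + e k) :=
    fun r => ⟨0, by rintro _ ⟨k, rfl⟩; exact add_nonneg ((hω k).1 r) (he0 k)⟩
  have hnonneg : ∀ r, 0 ≤ ⨅ k, (ω k r + e k) :=
    fun r => le_ciInf fun k => add_nonneg ((hω k).1 r) (he0 k)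
  have hsmall : ∀ ε > 0, ∀ᶠ r in 𝓝 0, ⨅ k, (ω k r + e k) < ε := by
    intro ε hε
    obtain ⟨k, hk⟩ := (he.eventually_lt_const (half_pos hε)).exists
    have hωk : Tendsto (ω k) (𝓝 0) (𝓝 0) := by simpa [(hω k).2.1] using (hω k).2.2.1.tendsto
    filter_upwards [hωk.eventually_lt_const (half_pos hε)] with r hr
    linarith [ciInf_le (hbdd r) k]
  have hzero : ⨅ k, (ω k 0 + e k) = 0 :=
    le_antisymm (le_of_forall_pos_le_add fun ε hε => by
      simpa using ((hsmall ε hε).self_of_nhds).le) (hnonneg 0)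
  refine ⟨hnonneg, hzero, ?_, fun a b hab => ciInf_mono (hbdd a) fun k =>
    add_le_add ((hω k).2.2.2 hab) le_rfl⟩
  change Tendsto _ (𝓝 0) (𝓝 (⨅ k, (ω k 0 + e k)))
  rw [hzero]
  exact tendsto_order.2 ⟨fun a ha => Eventually.of_forall fun r => ha.trans_le (hnonneg r),
    hsmall⟩

end IsModulus

section Derivative

variable {d : ℕ} {U W : P2 d → ℝ} {μ : P2 d} {φ ψ : Rd d → Rd d}

lemma isDerivAt_iff : IsDerivAt U μ φ ↔ Measurable φ ∧ MemLp φ 2 μ.1 ∧ ∃ ω, IsModulus ω ∧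
    ∀ ν Γ, IsCoupling μ ν Γ → |U ν - U μ - ∫ p, ⟪p.2 - p.1, φ p.1⟫ ∂Γ| ≤ C2 Γ * ω (C2 Γ) := by
  refine and_congr_right fun hφ => ?_
  rw [memLp_two_iff_lintegral_lt_top hφ.aestronglyMeasurable]
  simp only [IsModulus, and_assoc]

lemma IsDerivAt.sub (hU : IsDerivAt U μ φ) (hW : IsDerivAt W μ ψ) :
    IsDerivAt (fun ρ => U ρ - W ρ) μ (fun x => φ x - ψ x) := by
  rw [isDerivAt_iff] at *
  obtain ⟨hφ, hφ2, ω, hω, hUω⟩ := hU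
  obtain ⟨hψ, hψ2, ω', hω', hWω'⟩ := hW
  refine ⟨hφ.sub hψ, hφ2.sub hψ2, ω + ω', hω.add hω', fun ν Γ hΓ => ?_⟩
  rw [hΓ.integral_inner_sub hφ hφ2 hψ hψ2, Pi.add_apply, mul_add]
  calc _ = |(U ν - U μ - ∫ p, ⟪p.2 - p.1, φ p.1⟫ ∂Γ)
          - (W ν - W μ - ∫ p, ⟪p.2 - p.1, ψ p.1⟫ ∂Γ)| := by ring_nf
    _ ≤ _ := (abs_sub _ _).trans (add_le_add (hUω ν Γ hΓ) (hWω' ν Γ hΓ))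

end Derivative

lemma hasDerivAt_of_abs_sub_le {f : ℝ → ℝ} {f' t : ℝ} {ε : ℝ → ℝ}
    (hε : Tendsto ε (𝓝 t) (𝓝 0)) (h : ∀ s, |f s - f t - (s - t) * f'| ≤ |s - t| * ε s) :
    HasDerivAt f f' t := by
  rw [hasDerivAt_iff_isLittleO]
  have hsmall : (fun s => ε s * (s - t)) =o[𝓝 t] fun s => s - t := by
    simpa using ((Asymptotics.isLittleO_one_iff ℝ).2 hε).mul_isBigO
      (Asymptotics.isBigO_refl (fun s => s - t) (𝓝 t))
  refine (Asymptotics.IsBigO.of_bound 1 (Eventually.of_forall fun s => ?_)).trans_isLittleO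
    hsmall
  rw [one_mul, Real.norm_eq_abs, Real.norm_eq_abs, smul_eq_mul, abs_mul, mul_comm |ε s|]
  exact (h s).trans (mul_le_mul_of_nonneg_left (le_abs_self _) (abs_nonneg _))

def interp {E : Type*} [AddCommGroup E] [Module ℝ E] (t : ℝ) (p : E × E) : E :=
  p.1 + t • (p.2 - p.1)

section Interpolation

variable {d : ℕ} {μ ν : P2 d} {Γ : Measure (Rd d × Rd d)}

lemma measurable_interp (t : ℝ) : Measurable (interp (E := Rd d) t) :=
  measurable_fst.add ((measurable_snd.sub measurable_fst).const_smul t)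

lemma interp_sub_interp {E : Type*} [AddCommGroup E] [Module ℝ E] (s t : ℝ) (p : E × E) :
    interp s p - interp t p = (s - t) • (p.2 - p.1) := by
  simp only [interp, sub_smul]
  abel

/-- The displacement interpolation along `Γ`, at time `t`. -/
def interpP2 (hΓ : IsCoupling μ ν Γ) (t : ℝ) : P2 d :=
  ⟨Γ.map (interp t), by
    have := hΓ.isProbabilityMeasure
    exact Measure.isProbabilityMeasure_map (measurable_interp t).aemeasurable, by
    refine (memLp_two_iff_lintegral_lt_top aestronglyMeasurable_id).1 ?_
    rw [memLp_map_measure_iff aestronglyMeasurable_id (measurable_interp t).aemeasurable]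
    exact hΓ.memLp_fst.add ((hΓ.memLp_snd.sub hΓ.memLp_fst).const_smul t)⟩

lemma interpP2_zero (hΓ : IsCoupling μ ν Γ) : interpP2 hΓ 0 = μ := by
  refine Subtype.ext ?_
  change Γ.map (interp 0) = μ.1
  convert hΓ.1 using 2
  funext p
  simp [interp]

lemma interpP2_one (hΓ : IsCoupling μ ν Γ) : interpP2 hΓ 1 = ν := by
  refine Subtype.ext ?_
  change Γ.map (interp 1) = ν.1
  convert hΓ.2 using 2
  funext p
  simp [interp]

lemma measurable_interp_prod (t s : ℝ) :
    Measurable fun p : Rd d × Rd d => (interp t p, interp s p) :=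
  (measurable_interp t).prodMk (measurable_interp s)

lemma isCoupling_interpP2 (hΓ : IsCoupling μ ν Γ) (t s : ℝ) :
    IsCoupling (interpP2 hΓ t) (interpP2 hΓ s) (Γ.map fun p => (interp t p, interp s p)) :=
  ⟨by rw [Measure.map_map measurable_fst (measurable_interp_prod t s)]; rfl,
    by rw [Measure.map_map measurable_snd (measurable_interp_prod t s)]; rfl⟩

lemma C2_map_interp (t s : ℝ) :
    C2 (Γ.map fun p => (interp t p, interp s p)) = |s - t| * C2 Γ := by
  rw [C2_eq_toReal_eLpNorm, C2_eq_toReal_eLpNorm, eLpNorm_map_measure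
    (g := fun q => q.2 - q.1) (measurable_snd.sub measurable_fst).aestronglyMeasurable
    (measurable_interp_prod t s).aemeasurable]
  have : ((fun q : Rd d × Rd d => q.2 - q.1) ∘ fun p => (interp t p, interp s p))
      = (s - t) • fun p => p.2 - p.1 := by
    ext1 p
    exact interp_sub_interp s t p
  rw [this, eLpNorm_const_smul, ENNReal.toReal_mul, toReal_enorm, Real.norm_eq_abs]

lemma integral_inner_map_interp (t s : ℝ) {f : Rd d → Rd d} (hf : Measurable f) :
    ∫ q, ⟪q.2 - q.1, f q.1⟫ ∂(Γ.map fun p => (interp t p, interp s p))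
      = (s - t) * ∫ p, ⟪p.2 - p.1, f (interp t p)⟫ ∂Γ := by
  rw [integral_map (f := fun q => ⟪q.2 - q.1, f q.1⟫) (measurable_interp_prod t s).aemeasurable
    ((measurable_snd.sub measurable_fst).inner (hf.comp measurable_fst)).aestronglyMeasurable,
    ← integral_const_mul]
  simp_rw [interp_sub_interp, real_inner_smul_left]

end Interpolation

section MeanValue

variable {d : ℕ} {μ ν : P2 d} {Γ : Measure (Rd d × Rd d)}

lemma hasDerivAt_comp_interpP2 {W : P2 d → ℝ} {φ : Rd d → Rd d} (hΓ : IsCoupling μ ν Γ)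
    (t : ℝ) (hW : IsDerivAt W (interpP2 hΓ t) φ) :
    HasDerivAt (fun s => W (interpP2 hΓ s)) (∫ p, ⟪p.2 - p.1, φ (interp t p)⟫ ∂Γ) t := by
  obtain ⟨hφ, -, ω, hω, hWω⟩ := isDerivAt_iff.1 hW
  have hdist : Tendsto (fun s => |s - t| * C2 Γ) (𝓝 t) (𝓝 0) :=
    (by fun_prop : Continuous fun s => |s - t| * C2 Γ).tendsto' t 0 (by simp)
  have hε : Tendsto (fun s => C2 Γ * ω (|s - t| * C2 Γ)) (𝓝 t) (𝓝 0) := by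
    simpa [hω.2.1] using (hω.2.2.1.tendsto.comp hdist).const_mul (C2 Γ)
  refine hasDerivAt_of_abs_sub_le hε fun s => ?_
  have h := hWω (interpP2 hΓ s) _ (isCoupling_interpP2 hΓ t s)
  rwa [C2_map_interp, integral_inner_map_interp t s hφ, mul_assoc] at h

lemma abs_sub_le_mul_C2 {W : P2 d → ℝ} {DW : P2 d → Rd d → Rd d}
    (hW : ∀ ρ, IsDerivAt W ρ (DW ρ)) {L : ℝ≥0} (hL : ∀ ρ, eLpNorm (DW ρ) 2 ρ.1 ≤ L)
    (hΓ : IsCoupling μ ν Γ) : |W ν - W μ| ≤ L * C2 Γ := by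
  have hbound : ∀ t, ‖∫ p, ⟪p.2 - p.1, DW (interpP2 hΓ t) (interp t p)⟫ ∂Γ‖ ≤ L * C2 Γ := by
    intro t
    obtain ⟨hφ, hφ2, -⟩ := isDerivAt_iff.1 (hW (interpP2 hΓ t))
    have hmap : Γ.map (interp t) = (interpP2 hΓ t).1 := rfl
    have hnorm := hL (interpP2 hΓ t)
    rw [← hmap] at hφ2 hnorm
    rw [memLp_map_measure_iff hφ.aestronglyMeasurable (measurable_interp t).aemeasurable] at hφ2
    rw [eLpNorm_map_measure hφ.aestronglyMeasurable (measurable_interp t).aemeasurable] at hnorm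
    rw [Real.norm_eq_abs, mul_comm]
    refine (hΓ.abs_integral_inner_le hφ2).trans
      (mul_le_mul_of_nonneg_left ?_ (C2_nonneg Γ))
    exact ENNReal.toReal_le_of_le_ofReal L.2 (by simpa using hnorm)
  have h := norm_image_sub_le_of_norm_deriv_le_segment_01'
    (fun t _ => (hasDerivAt_comp_interpP2 hΓ t (hW _)).hasDerivWithinAt) (fun t _ => hbound t)
  simpa only [interpP2_zero, interpP2_one, Real.norm_eq_abs] using h

end MeanValue

section LimitDerivative

variable {d : ℕ} {V : P2 d → ℝ} {ρ : P2 d} {φ : Rd d → Rd d}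

lemma isDerivAt_of_approx (hφ : Measurable φ) (hφ2 : MemLp φ 2 ρ.1)
    (happrox : ∀ ε > 0, ∃ (W : P2 d → ℝ) (ψ : Rd d → Rd d), IsDerivAt W ρ ψ ∧
      eLpNorm (fun x => ψ x - φ x) 2 ρ.1 ≤ ENNReal.ofReal ε ∧
      ∀ ν Γ, IsCoupling ρ ν Γ → |(W ν - V ν) - (W ρ - V ρ)| ≤ ε * C2 Γ) :
    IsDerivAt V ρ φ := by
  set e : ℕ → ℝ := fun k => 1 / ((k : ℝ) + 1)
  have he0 : ∀ k, 0 < e k := fun k => by positivity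
  choose W ψ hW hψφ hlip using fun k => happrox (e k) (he0 k)
  choose hψ hψ2 ω hω hWω using fun k => isDerivAt_iff.1 (hW k)
  have he : Tendsto (fun k => 2 * e k) atTop (𝓝 0) := by
    simpa [e] using tendsto_one_div_add_atTop_nhds_zero_nat.const_mul (2 : ℝ)
  refine isDerivAt_iff.2 ⟨hφ, hφ2, _, IsModulus.iInf_add hω (fun k => by positivity) he,
    fun ν Γ hΓ => ?_⟩
  have hbound : ∀ k, |V ν - V ρ - ∫ p, ⟪p.2 - p.1, φ p.1⟫ ∂Γ|
      ≤ C2 Γ * (ω k (C2 Γ) + 2 * e k) := by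
    intro k
    have hψφ' : |∫ p, ⟪p.2 - p.1, ψ k p.1 - φ p.1⟫ ∂Γ| ≤ C2 Γ * e k :=
      (hΓ.abs_integral_inner_comp_fst_le ((hψ k).sub hφ) ((hψ2 k).sub hφ2)).trans
        (mul_le_mul_of_nonneg_left (ENNReal.toReal_le_of_le_ofReal (he0 k).le (hψφ k))
          (C2_nonneg Γ))
    rw [hΓ.integral_inner_sub (hψ k) (hψ2 k) hφ hφ2] at hψφ'
    calc _ = |(W k ν - W k ρ - ∫ p, ⟪p.2 - p.1, ψ k p.1⟫ ∂Γ)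
          - ((W k ν - V ν) - (W k ρ - V ρ))
          + (∫ p, ⟪p.2 - p.1, ψ k p.1⟫ ∂Γ - ∫ p, ⟪p.2 - p.1, φ p.1⟫ ∂Γ)| := by ring_nf
      _ ≤ C2 Γ * ω k (C2 Γ) + e k * C2 Γ + C2 Γ * e k :=
        (abs_add_le _ _).trans (add_le_add ((abs_sub _ _).trans
          (add_le_add (hWω k ν Γ hΓ) (hlip k ν Γ hΓ))) hψφ')
      _ = C2 Γ * (ω k (C2 Γ) + 2 * e k) := by ring
  rw [Real.mul_iInf_of_nonneg (C2_nonneg Γ)]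
  exact le_ciInf hbound

end LimitDerivative

lemma iSup_le_iSup_add_iSup {ι : Sort*} {a f g : ι → ℝ≥0∞} (h : ∀ i, a i ≤ f i + g i) :
    ⨆ i, a i ≤ (⨆ i, f i) + ⨆ i, g i :=
  iSup_le fun i => (h i).trans (add_le_add (le_iSup f i) (le_iSup g i))

section Norm

variable {d : ℕ} {α : ℝ} {W V : P2 d → ℝ} {DW DV : P2 d → Rd d → Rd d}

lemma Ialpha_le_iff {c : ℝ≥0∞} : Ialpha α DW ≤ c ↔ ∀ μ ν Γ, IsCoupling μ ν Γ → 0 < C2 Γ →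
    (α = 1 ∨ C2 Γ ≤ 1) →
    eLpNorm (fun p => DW μ p.1 - DW ν p.2) 2 Γ / ENNReal.ofReal (C2 Γ) ^ α ≤ c := by
  simp only [Ialpha, iSup_le_iff, eLpNorm_two_eq_lintegral]

lemma le_Ialpha {μ ν : P2 d} {Γ : Measure (Rd d × Rd d)} (hΓ : IsCoupling μ ν Γ)
    (hpos : 0 < C2 Γ) (hα : α = 1 ∨ C2 Γ ≤ 1) :
    eLpNorm (fun p => DW μ p.1 - DW ν p.2) 2 Γ / ENNReal.ofReal (C2 Γ) ^ α ≤ Ialpha α DW :=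
  Ialpha_le_iff.1 le_rfl μ ν Γ hΓ hpos hα

lemma Nnorm_eq : Nnorm α W DW
    = (⨆ μ, ‖W μ‖ₑ) + (⨆ μ : P2 d, eLpNorm (DW μ) 2 μ.1) + Ialpha α DW := by
  simp only [Nnorm, eLpNorm_two_eq_lintegral, enorm_eq_nnnorm]

lemma enorm_le_Nnorm (μ : P2 d) : ‖W μ‖ₑ ≤ Nnorm α W DW := by
  rw [Nnorm_eq, add_assoc]
  exact (le_iSup (fun μ => ‖W μ‖ₑ) μ).trans le_self_add

lemma eLpNorm_le_Nnorm (μ : P2 d) : eLpNorm (DW μ) 2 μ.1 ≤ Nnorm α W DW := by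
  rw [Nnorm_eq]
  exact (le_iSup (fun μ : P2 d => eLpNorm (DW μ) 2 μ.1) μ).trans (le_add_self.trans le_self_add)

lemma Ialpha_le_Nnorm : Ialpha α DW ≤ Nnorm α W DW := by
  rw [Nnorm_eq]
  exact le_add_self

lemma Ialpha_le_add (hW : ∀ μ, Measurable (DW μ)) (hV : ∀ μ, Measurable (DV μ)) :
    Ialpha α DV ≤ Ialpha α DW + Ialpha α (fun μ x => DW μ x - DV μ x) := by
  refine Ialpha_le_iff.2 fun μ ν Γ hΓ hpos hα => ?_
  have hsplit : (fun p : Rd d × Rd d => (DW μ p.1 - DW ν p.2) - (DV μ p.1 - DV ν p.2))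
      = fun p => (DW μ p.1 - DV μ p.1) - (DW ν p.2 - DV ν p.2) := by
    funext p
    abel
  have htri := eLpNorm_le_eLpNorm_add_eLpNorm_sub one_le_two (m := Γ)
    (f := fun p => DW μ p.1 - DW ν p.2) (g := fun p => DV μ p.1 - DV ν p.2)
    (by fun_prop) (by fun_prop)
  rw [hsplit] at htri
  exact (ENNReal.div_le_div_right htri _).trans (ENNReal.add_div.trans_le
    (add_le_add (le_Ialpha hΓ hpos hα) (le_Ialpha (DW := fun μ x => DW μ x - DV μ x) hΓ hpos hα)))

lemma Nnorm_le_add (hW : ∀ μ, Measurable (DW μ)) (hV : ∀ μ, Measurable (DV μ)) :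
    Nnorm α V DV ≤ Nnorm α W DW + Nnorm α (fun ρ => W ρ - V ρ) (fun μ x => DW μ x - DV μ x) := by
  have hsup : ⨆ μ, ‖V μ‖ₑ ≤ (⨆ μ, ‖W μ‖ₑ) + ⨆ μ, ‖W μ - V μ‖ₑ :=
    iSup_le_iSup_add_iSup fun μ => by
      simpa using enorm_sub_le (a := W μ) (b := W μ - V μ)
  have hL2 : ⨆ μ : P2 d, eLpNorm (DV μ) 2 μ.1 ≤ (⨆ μ : P2 d, eLpNorm (DW μ) 2 μ.1)
      + ⨆ μ : P2 d, eLpNorm (fun x => DW μ x - DV μ x) 2 μ.1 :=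
    iSup_le_iSup_add_iSup fun μ => eLpNorm_le_eLpNorm_add_eLpNorm_sub one_le_two
      (hW μ).aestronglyMeasurable (hV μ).aestronglyMeasurable
  rw [Nnorm_eq, Nnorm_eq, Nnorm_eq]
  calc _ ≤ _ := add_le_add (add_le_add hsup hL2) (Ialpha_le_add hW hV)
    _ = _ := by ring

lemma Nnorm_le_three_mul_of_tendsto {W : ℕ → P2 d → ℝ} {DW : ℕ → P2 d → Rd d → Rd d}
    {c : ℝ≥0∞} (hW : ∀ m μ, Measurable (DW m μ)) (hV : ∀ μ, Measurable (DV μ))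
    (hlim : ∀ μ, Tendsto (fun m => W m μ) atTop (𝓝 (V μ)))
    (hDlim : ∀ μ : P2 d, Tendsto (fun m => eLpNorm (fun x => DW m μ x - DV μ x) 2 μ.1) atTop (𝓝 0))
    (hle : ∀ᶠ m in atTop, Nnorm α (W m) (DW m) ≤ c) :
    Nnorm α V DV ≤ 3 * c := by
  have hsup : ⨆ μ, ‖V μ‖ₑ ≤ c := iSup_le fun μ =>
    le_of_tendsto ((continuous_enorm.tendsto _).comp (hlim μ))
      (hle.mono fun m hm => (enorm_le_Nnorm μ).trans hm)
  have hL2 : ⨆ μ : P2 d, eLpNorm (DV μ) 2 μ.1 ≤ c := iSup_le fun μ =>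
    ge_of_tendsto (by simpa using tendsto_const_nhds.add (hDlim μ)) (hle.mono fun m hm =>
      (eLpNorm_le_eLpNorm_add_eLpNorm_sub one_le_two (hW m μ).aestronglyMeasurable
        (hV μ).aestronglyMeasurable).trans (add_le_add ((eLpNorm_le_Nnorm μ).trans hm) le_rfl))
  have hI : Ialpha α DV ≤ c := by
    refine Ialpha_le_iff.2 fun μ ν Γ hΓ hpos hα => ?_
    have hδ := ENNReal.Tendsto.div_const ((hDlim μ).add (hDlim ν))
      (b := ENNReal.ofReal (C2 Γ) ^ α)
      (Or.inr (ENNReal.rpow_pos (ENNReal.ofReal_pos.2 hpos) ENNReal.ofReal_ne_top).ne')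
    refine ge_of_tendsto (by simpa using tendsto_const_nhds.add hδ) (hle.mono fun m hm => ?_)
    have hsplit : (fun p : Rd d × Rd d => (DW m μ p.1 - DW m ν p.2) - (DV μ p.1 - DV ν p.2))
        = fun p => (DW m μ p.1 - DV μ p.1) - (DW m ν p.2 - DV ν p.2) := by
      funext p
      abel
    have hcoupled := eLpNorm_le_eLpNorm_add_eLpNorm_sub one_le_two (m := Γ)
      (f := fun p => DW m μ p.1 - DW m ν p.2) (g := fun p => DV μ p.1 - DV ν p.2)
      (by fun_prop) (by fun_prop)
    rw [hsplit] at hcoupled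
    replace hcoupled := hcoupled.trans (add_le_add le_rfl
      (hΓ.eLpNorm_sub_le (f := fun x => DW m μ x - DV μ x) (g := fun x => DW m ν x - DV ν x)
        (by fun_prop) (by fun_prop)))
    calc _ ≤ _ := ENNReal.div_le_div_right hcoupled _
      _ = _ := ENNReal.add_div
      _ ≤ _ := add_le_add ((le_Ialpha hΓ hpos hα).trans (Ialpha_le_Nnorm.trans hm)) le_rfl
  rw [Nnorm_eq]
  calc _ ≤ c + c + c := add_le_add (add_le_add hsup hL2) hI
    _ = 3 * c := by ring

end Norm

lemma exists_measurable_tendsto_eLpNorm {X E : Type*} [MeasurableSpace X] [NormedAddCommGroup E]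
    [CompleteSpace E] [MeasurableSpace E] [BorelSpace E] {m : Measure X} {p : ℝ≥0∞}
    [Fact (1 ≤ p)] {f : ℕ → X → E} (hf : ∀ n, MemLp (f n) p m)
    (hcau : ∀ ε > 0, ∃ N, ∀ n, N ≤ n → ∀ k, N ≤ k → eLpNorm (fun x => f n x - f k x) p m < ε) :
    ∃ g, Measurable g ∧ MemLp g p m ∧
      Tendsto (fun n => eLpNorm (fun x => f n x - g x) p m) atTop (𝓝 0) := by
  have hF : CauchySeq fun n => (hf n).toLp (f n) := by
    refine EMetric.cauchySeq_iff.2 fun ε hε => ?_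
    obtain ⟨N, hN⟩ := hcau ε hε
    exact ⟨N, fun n hn k hk => by rw [Lp.edist_toLp_toLp]; exact hN n hn k hk⟩
  obtain ⟨G, hG⟩ := cauchySeq_tendsto_of_complete hF
  refine ⟨G, (Lp.stronglyMeasurable G).measurable, Lp.memLp G, ?_⟩
  refine (tendsto_iff_edist_tendsto_0.1 hG).congr fun n => ?_
  rw [Lp.edist_def]
  exact eLpNorm_congr_ae ((hf n).coeFn_toLp.sub (ae_eq_refl _))

def IsNnormCauchy {d : ℕ} (α : ℝ) (U : ℕ → P2 d → ℝ) (DU : ℕ → P2 d → Rd d → Rd d) : Prop :=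
  ∀ ε : ℝ≥0∞, 0 < ε → ∃ N₀ : ℕ, ∀ n m, N₀ ≤ n → N₀ ≤ m →
    Nnorm α (fun ρ => U n ρ - U m ρ) (fun μ x => DU n μ x - DU m μ x) < ε

namespace IsNnormCauchy

variable {d : ℕ} {α : ℝ} {U : ℕ → P2 d → ℝ} {DU : ℕ → P2 d → Rd d → Rd d}
  {V : P2 d → ℝ} {DV : P2 d → Rd d → Rd d}

lemma cauchySeq_apply (h : IsNnormCauchy α U DU) (ρ : P2 d) : CauchySeq fun n => U n ρ := by
  refine EMetric.cauchySeq_iff.2 fun ε hε => ?_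
  obtain ⟨N, hN⟩ := h ε hε
  exact ⟨N, fun n hn m hm => by
    rw [edist_eq_enorm_sub]
    exact (enorm_le_Nnorm ρ).trans_lt (hN n m hn hm)⟩

lemma exists_tendsto_eLpNorm (h : IsNnormCauchy α U DU)
    (hdiff : ∀ n μ, IsDerivAt (U n) μ (DU n μ)) (ρ : P2 d) :
    ∃ g, Measurable g ∧ MemLp g 2 ρ.1 ∧
      Tendsto (fun n => eLpNorm (fun x => DU n ρ x - g x) 2 ρ.1) atTop (𝓝 0) := by
  refine exists_measurable_tendsto_eLpNorm (fun n => (isDerivAt_iff.1 (hdiff n ρ)).2.1)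
    fun ε hε => ?_
  obtain ⟨N, hN⟩ := h ε hε
  exact ⟨N, fun n hn m hm => (eLpNorm_le_Nnorm (W := fun ρ => U n ρ - U m ρ)
    (DW := fun μ x => DU n μ x - DU m μ x) ρ).trans_lt (hN n m hn hm)⟩

lemma abs_sub_sub_le (h : IsNnormCauchy α U DU) (hdiff : ∀ n μ, IsDerivAt (U n) μ (DU n μ))
    (hV : ∀ ρ, Tendsto (fun n => U n ρ) atTop (𝓝 (V ρ))) {ε : ℝ≥0} (hε : 0 < ε) :
    ∃ N, ∀ n, N ≤ n → ∀ μ ν Γ, IsCoupling μ ν Γ →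
      |(U n ν - V ν) - (U n μ - V μ)| ≤ ε * C2 Γ := by
  obtain ⟨N, hN⟩ := h ε (by exact_mod_cast hε)
  refine ⟨N, fun n hn μ ν Γ hΓ => le_of_tendsto
    ((tendsto_const_nhds.sub (hV ν)).sub (tendsto_const_nhds.sub (hV μ))).abs
    (eventually_atTop.2 ⟨N, fun m hm => ?_⟩)⟩
  exact abs_sub_le_mul_C2 (fun ρ => (hdiff n ρ).sub (hdiff m ρ))
    (fun ρ => (eLpNorm_le_Nnorm (W := fun ρ => U n ρ - U m ρ)
      (DW := fun μ x => DU n μ x - DU m μ x) ρ).trans (hN n m hn hm).le) hΓ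

lemma eventually_Nnorm_sub_le (h : IsNnormCauchy α U DU) (hmeas : ∀ n μ, Measurable (DU n μ))
    (hDVm : ∀ μ, Measurable (DV μ)) (hV : ∀ ρ, Tendsto (fun n => U n ρ) atTop (𝓝 (V ρ)))
    (hDV : ∀ ρ : P2 d, Tendsto (fun n => eLpNorm (fun x => DU n ρ x - DV ρ x) 2 ρ.1) atTop (𝓝 0))
    {ε : ℝ≥0∞} (hε : 0 < ε) :
    ∀ᶠ n in atTop, Nnorm α (fun ρ => U n ρ - V ρ) (fun μ x => DU n μ x - DV μ x) ≤ 3 * ε := by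
  have hDV' : ∀ n (ρ : P2 d), Tendsto (fun m => eLpNorm
      (fun x => (DU n ρ x - DU m ρ x) - (DU n ρ x - DV ρ x)) 2 ρ.1) atTop (𝓝 0) := by
    intro n ρ
    simp_rw [sub_sub_sub_cancel_left]
    exact (hDV ρ).congr fun m => eLpNorm_sub_comm (DU m ρ) (DV ρ) 2 ρ.1
  obtain ⟨N, hN⟩ := h ε hε
  exact eventually_atTop.2 ⟨N, fun n hn => Nnorm_le_three_mul_of_tendsto
    (fun m μ => (hmeas n μ).sub (hmeas m μ)) (fun μ => (hmeas n μ).sub (hDVm μ))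
    (fun ρ => tendsto_const_nhds.sub (hV ρ)) (hDV' n)
    (eventually_atTop.2 ⟨N, fun m hm => (hN n m hn hm).le⟩)⟩

lemma isDerivAt_limit (h : IsNnormCauchy α U DU) (hdiff : ∀ n μ, IsDerivAt (U n) μ (DU n μ))
    (hV : ∀ ρ, Tendsto (fun n => U n ρ) atTop (𝓝 (V ρ))) {ρ : P2 d} (hDVm : Measurable (DV ρ))
    (hDV2 : MemLp (DV ρ) 2 ρ.1)
    (hDV : Tendsto (fun n => eLpNorm (fun x => DU n ρ x - DV ρ x) 2 ρ.1) atTop (𝓝 0)) :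
    IsDerivAt V ρ (DV ρ) := by
  refine isDerivAt_of_approx hDVm hDV2 fun ε hε => ?_
  obtain ⟨N, hN⟩ := h.abs_sub_sub_le hdiff hV (ε := ⟨ε, hε.le⟩) hε
  obtain ⟨n, hn, hclose⟩ := ((eventually_ge_atTop N).and
    (hDV.eventually (ge_mem_nhds (ENNReal.ofReal_pos.2 hε)))).exists
  exact ⟨U n, DU n ρ, hdiff n ρ, hclose, fun ν Γ hΓ => hN n hn ρ ν Γ hΓ⟩

end IsNnormCauchy

theorem stmt13_general {d : ℕ} (α : ℝ)
    (U : ℕ → P2 d → ℝ) (DU : ℕ → P2 d → Rd d → Rd d)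
    (hdiff : ∀ n (μ : P2 d), IsDerivAt (U n) μ (DU n μ))
    (hfin : ∀ n, Nnorm α (U n) (DU n) < ⊤)
    (hcauchy : ∀ ε : ℝ≥0∞, 0 < ε → ∃ N₀ : ℕ, ∀ n m, N₀ ≤ n → N₀ ≤ m →
      Nnorm α (fun ρ => U n ρ - U m ρ) (fun μ x => DU n μ x - DU m μ x) < ε) :
    ∃ (V : P2 d → ℝ) (DV : P2 d → Rd d → Rd d),
      (∀ μ : P2 d, IsDerivAt V μ (DV μ)) ∧
      Nnorm α V DV < ⊤ ∧
      Filter.Tendsto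
        (fun n => Nnorm α (fun ρ => U n ρ - V ρ) (fun μ x => DU n μ x - DV μ x))
        Filter.atTop (nhds 0) := by
  have hcauchy : IsNnormCauchy α U DU := hcauchy
  have hmeas : ∀ n μ, Measurable (DU n μ) := fun n μ => (hdiff n μ).1
  choose V hV using fun ρ => cauchySeq_tendsto_of_complete (hcauchy.cauchySeq_apply ρ)
  choose DV hDVm hDV2 hDV using hcauchy.exists_tendsto_eLpNorm hdiff
  have hclose := fun ε (hε : 0 < ε) => hcauchy.eventually_Nnorm_sub_le hmeas hDVm hV hDV hε
  refine ⟨V, DV, fun ρ => hcauchy.isDerivAt_limit hdiff hV (hDVm ρ) (hDV2 ρ) (hDV ρ), ?_, ?_⟩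
  · obtain ⟨N, hN⟩ := (hclose 1 one_pos).exists
    exact (Nnorm_le_add (fun μ => hmeas N μ) hDVm).trans_lt (ENNReal.add_lt_top.2
      ⟨hfin N, hN.trans_lt (by norm_num)⟩)
  · refine ENNReal.tendsto_nhds_zero.2 fun ε hε => (hclose (ε / 3) ?_).mono fun n hn => ?_
    · exact ENNReal.div_pos hε.ne' (by norm_num)
    · rwa [ENNReal.mul_div_cancel (by norm_num) (by norm_num)] at hn

theorem stmt13 {d : ℕ} (α : ℝ) (hα : 0 < α ∧ α ≤ 1)
    (U : ℕ → P2 d → ℝ) (DU : ℕ → P2 d → Rd d → Rd d)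
    (hdiff : ∀ n (μ : P2 d), IsDerivAt (U n) μ (DU n μ))
    (hdiffsub : ∀ n m (μ : P2 d),
      IsDerivAt (fun ρ => U n ρ - U m ρ) μ (fun x => DU n μ x - DU m μ x))
    (hfin : ∀ n, Nnorm α (U n) (DU n) < ⊤)
    (hcauchy : ∀ ε : ℝ≥0∞, 0 < ε → ∃ N₀ : ℕ, ∀ n m, N₀ ≤ n → N₀ ≤ m →
      Nnorm α (fun ρ => U n ρ - U m ρ) (fun μ x => DU n μ x - DU m μ x) < ε) :
    ∃ (V : P2 d → ℝ) (DV : P2 d → Rd d → Rd d),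
      (∀ μ : P2 d, IsDerivAt V μ (DV μ)) ∧
      Nnorm α V DV < ⊤ ∧
      Filter.Tendsto
        (fun n => Nnorm α (fun ρ => U n ρ - V ρ) (fun μ x => DU n μ x - DV μ x))
        Filter.atTop (nhds 0) :=
  stmt13_general α U DU hdiff hfin hcauchy
end
end
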